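/- arXiv:2209.06304 — 2 statements merged into one kernel-verified Lean document; each statement's English description precedes it below -/
import Mathlib

section
/- Let G and H be finite strongly connected graphs, and suppose Φ' : G → H is a right resolver with the same vertex map as a bi-resolver Φ: G → H. If S ⊆ ∂Φ'^{-1}(I) is a maximal synchronized set under Φ' and e is an edge of H terminating at I, then e ·_{Φ'} S is a maximal synchronized set under Φ' with |e ·_{Φ'} S| = |S|. -/
/-- A finite directed multigraph. -/
structure MGraph where
  V : Type
  E : Type
  [fV : Fintype V]
  [fE : Fintype E]
  src : E → V
  tgt : E → V

attribute [instance] MGraph.fV MGraph.fE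

namespace MGraph

/-- `G.IsPathFrom I w` : the list of edges `w` is a path starting at `I`. -/
def IsPathFrom (G : MGraph) : G.V → List G.E → Prop
  | _, [] => True
  | I, e :: es => G.src e = I ∧ G.IsPathFrom (G.tgt e) es

/-- Terminal vertex of the path `w` starting at `I`. -/
def pathEnd (G : MGraph) : G.V → List G.E → G.V
  | I, [] => I
  | _, e :: es => G.pathEnd (G.tgt e) es

def StronglyConnected (G : MGraph) : Prop :=
  ∀ I J : G.V, ∃ w : List G.E, G.IsPathFrom I w ∧ G.pathEnd I w = J

/-- Graph homomorphism. -/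
structure Hom (G H : MGraph) where
  vmap : G.V → H.V
  emap : G.E → H.E
  src_map : ∀ e, H.src (emap e) = vmap (G.src e)
  tgt_map : ∀ e, H.tgt (emap e) = vmap (G.tgt e)

/-- Right resolving: surjective, and a bijection on outgoing edge sets. -/
def Hom.RightResolving {G H : MGraph} (Φ : Hom G H) : Prop :=
  Function.Surjective Φ.vmap ∧
  ∀ I : G.V, Set.BijOn Φ.emap {e | G.src e = I} {f | H.src f = Φ.vmap I}

/-- Left resolving: surjective, and a bijection on incoming edge sets. -/
def Hom.LeftResolving {G H : MGraph} (Φ : Hom G H) : Prop :=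
  Function.Surjective Φ.vmap ∧
  ∀ I : G.V, Set.BijOn Φ.emap {e | G.tgt e = I} {f | H.tgt f = Φ.vmap I}

def Hom.BiResolving {G H : MGraph} (Φ : Hom G H) : Prop :=
  Φ.RightResolving ∧ Φ.LeftResolving

/-- Forward action: terminal vertices of lifts of `w` starting in `U`. -/
def Hom.fwd {G H : MGraph} (Φ : Hom G H) (U : Set G.V) (w : List H.E) : Set G.V :=
  {J' | ∃ I' ∈ U, ∃ π : List G.E,
    G.IsPathFrom I' π ∧ π.map Φ.emap = w ∧ G.pathEnd I' π = J'}

/-- Backward action: starting vertices whose lift of `w` ends in `S`. -/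
def Hom.bwd {G H : MGraph} (Φ : Hom G H) (w : List H.E) (S : Set G.V) : Set G.V :=
  {J' | ∃ π : List G.E,
    G.IsPathFrom J' π ∧ π.map Φ.emap = w ∧ G.pathEnd J' π ∈ S}

end MGraph

open MGraph


/-- `S` is a synchronized set of `Φ` over the vertex `J` of `H`:
`S = u ·_Φ I₀` for some path `u` in `H` from `J` to `∂Φ(I₀)`. -/
def MGraph.Hom.Synced {G H : MGraph} (Φ : MGraph.Hom G H) (J : H.V) (S : Set G.V) : Prop :=
  ∃ (u : List H.E) (I₀ : G.V),
    H.IsPathFrom J u ∧ H.pathEnd J u = Φ.vmap I₀ ∧ S = Φ.bwd u {I₀}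

/-- `S` is a maximal synchronized set (MSS) of `Φ` over `J`: a synchronized set such
that `|v ·_Φ S| ≤ |S|` for every path `v` in `H` ending at `J`. -/
def MGraph.Hom.IsMSS {G H : MGraph} (Φ : MGraph.Hom G H) (J : H.V) (S : Set G.V) : Prop :=
  Φ.Synced J S ∧
  ∀ (K : H.V) (v : List H.E), H.IsPathFrom K v → H.pathEnd K v = J →
    (Φ.bwd v S).ncard ≤ S.ncard

namespace MGraph

lemma pathEnd_append (G : MGraph) (I : G.V) (p q : List G.E) :
    G.pathEnd I (p ++ q) = G.pathEnd (G.pathEnd I p) q := by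
  induction p generalizing I with
  | nil => rfl
  | cons e es ih => simpa [pathEnd] using ih (G.tgt e)

lemma isPathFrom_append (G : MGraph) (I : G.V) (p q : List G.E) :
    G.IsPathFrom I (p ++ q) ↔ G.IsPathFrom I p ∧ G.IsPathFrom (G.pathEnd I p) q := by
  induction p generalizing I with
  | nil => simp [IsPathFrom, pathEnd]
  | cons e es ih => simp [IsPathFrom, pathEnd, ih, and_assoc]

lemma Hom.bwd_append {G H : MGraph} (Ψ : Hom G H) (v w : List H.E) (S : Set G.V) :
    Ψ.bwd (v ++ w) S = Ψ.bwd v (Ψ.bwd w S) := by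
  ext J'
  constructor
  · rintro ⟨π, hp, hm, hend⟩
    obtain ⟨π₁, π₂, rfl, h1, h2⟩ := List.map_eq_append_iff.mp hm
    rw [G.isPathFrom_append] at hp
    exact ⟨π₁, hp.1, h1, π₂, hp.2, h2, by rwa [G.pathEnd_append] at hend⟩
  · rintro ⟨π₁, hp1, h1, π₂, hp2, h2, hend⟩
    exact ⟨π₁ ++ π₂, (G.isPathFrom_append _ _ _).mpr ⟨hp1, hp2⟩, by simp [h1, h2],
      by rw [G.pathEnd_append]; exact hend⟩

lemma Hom.mem_bwd_single {G H : MGraph} (Ψ : Hom G H) (f : H.E) (S : Set G.V) (J' : G.V) :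
    J' ∈ Ψ.bwd [f] S ↔ ∃ e', G.src e' = J' ∧ Ψ.emap e' = f ∧ G.tgt e' ∈ S := by
  constructor
  · rintro ⟨π, hp, hm, hend⟩
    cases π with
    | nil => simp at hm
    | cons e' es =>
      simp only [List.map_cons, List.cons.injEq, List.map_eq_nil_iff] at hm
      obtain ⟨hm1, hm2⟩ := hm
      subst hm2
      exact ⟨e', hp.1, hm1, hend⟩
  · rintro ⟨e', h1, h2, h3⟩
    exact ⟨[e'], ⟨h1, trivial⟩, by simp [h2], h3⟩

lemma ncard_eq_of_bijOn {α β : Type*} {f : α → β} {s : Set α} {t : Set β}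
    (h : Set.BijOn f s t) : s.ncard = t.ncard := by
  rw [← h.image_eq, Set.ncard_image_of_injOn h.injOn]

end MGraph

/-- If there is a bi-resolver with the same vertex map as the right
resolver Φ', then pulling a maximal synchronized set back along an edge yields a
maximal synchronized set of the same cardinality. -/
theorem mss_bwd_edge {G H : MGraph}
    (hG : G.StronglyConnected) (hH : H.StronglyConnected)
    (Φ Φ' : MGraph.Hom G H) (hΦ : Φ.BiResolving) (hΦ' : Φ'.RightResolving)
    (hvmap : Φ'.vmap = Φ.vmap)
    (I : H.V) (S : Set G.V) (hS : S ⊆ Φ'.vmap ⁻¹' {I}) (hmss : Φ'.IsMSS I S)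
    (e : H.E) (he : H.tgt e = I) :
    Φ'.IsMSS (H.src e) (Φ'.bwd [e] S) ∧ (Φ'.bwd [e] S).ncard = S.ncard := by
  classical
  obtain ⟨hsync, hmax⟩ := hmss
  -- incoming edges of I in H
  set InI : Finset H.E := Finset.univ.filter (fun f => H.tgt f = I) with hInI
  -- edges of G terminating in S
  set ES : Finset G.E := Finset.univ.filter (fun e' => G.tgt e' ∈ S) with hES
  have hSmem : ∀ I' ∈ S, Φ'.vmap I' = I := fun I' hI' => hS hI'
  -- each term ≤ |S|
  have hle : ∀ f : H.E, H.tgt f = I → (Φ'.bwd [f] S).ncard ≤ S.ncard := by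
    intro f hf
    exact hmax (H.src f) [f] ⟨rfl, trivial⟩ hf
  -- Step B: |ES| = ∑_{f ∈ InI} |bwd [f] S|
  have hB : ES.card = ∑ f ∈ InI, (Φ'.bwd [f] S).ncard := by
    have hmap : ∀ e' ∈ ES, Φ'.emap e' ∈ InI := by
      intro e' he'
      simp only [hES, Finset.mem_filter, Finset.mem_univ, true_and] at he'
      simp only [hInI, Finset.mem_filter, Finset.mem_univ, true_and]
      rw [Φ'.tgt_map]
      exact hSmem _ he'
    rw [Finset.card_eq_sum_card_fiberwise hmap]
    refine Finset.sum_congr rfl (fun f hf => ?_)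
    -- fiber over f ↔ bwd [f] S via src
    have hbij : Set.BijOn G.src {e' | Φ'.emap e' = f ∧ G.tgt e' ∈ S} (Φ'.bwd [f] S) := by
      refine ⟨fun e' he' => ?_, fun e₁ h₁ e₂ h₂ hsrc => ?_, fun J' hJ' => ?_⟩
      · exact (Φ'.mem_bwd_single f S _).mpr ⟨e', rfl, he'.1, he'.2⟩
      · exact (hΦ'.2 (G.src e₁)).injOn rfl hsrc.symm (h₁.1.trans h₂.1.symm)
      · obtain ⟨e', h1, h2, h3⟩ := (Φ'.mem_bwd_single f S J').mp hJ'
        exact ⟨e', ⟨h2, h3⟩, h1⟩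
    have := MGraph.ncard_eq_of_bijOn hbij
    rw [← this]
    rw [Set.ncard_eq_toFinset_card']
    congr 1
    ext e'
    simp [hES, and_comm]
  -- Step A: |ES| = |S| * |InI|
  have hA : ES.card = S.ncard * InI.card := by
    have hmap : ∀ e' ∈ ES, G.tgt e' ∈ S.toFinset := by
      intro e' he'
      simp only [hES, Finset.mem_filter, Finset.mem_univ, true_and] at he'
      simpa using he'
    rw [Finset.card_eq_sum_card_fiberwise hmap]
    have hterm : ∀ I' ∈ S.toFinset, (ES.filter (fun e' => G.tgt e' = I')).card = InI.card := by
      intro I' hI'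
      rw [Set.mem_toFinset] at hI'
      have hbij := hΦ.2.2 I'
      have hv : Φ.vmap I' = I := by rw [← hvmap]; exact hSmem _ hI'
      rw [hv] at hbij
      have h1 : (ES.filter (fun e' => G.tgt e' = I')) = {e' | G.tgt e' = I'}.toFinset := by
        ext e'
        simp only [hES, Finset.mem_filter, Finset.mem_univ, true_and, Set.mem_toFinset,
          Set.mem_setOf_eq]
        constructor
        · exact fun h => h.2
        · exact fun h => ⟨h ▸ hI', h⟩
      have h2 : InI = {f | H.tgt f = I}.toFinset := by
        ext f; simp [hInI]
      rw [h1, h2, ← Set.ncard_eq_toFinset_card', ← Set.ncard_eq_toFinset_card']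
      exact MGraph.ncard_eq_of_bijOn hbij
    rw [Finset.sum_congr rfl hterm, Finset.sum_const, smul_eq_mul,
      ← Set.ncard_eq_toFinset_card']
  -- termwise equality
  have hsum : ∑ f ∈ InI, (Φ'.bwd [f] S).ncard = ∑ f ∈ InI, S.ncard := by
    rw [← hB, hA, Finset.sum_const, smul_eq_mul, mul_comm]
  have heach : ∀ f ∈ InI, (Φ'.bwd [f] S).ncard = S.ncard := by
    refine (Finset.sum_eq_sum_iff_of_le ?_).mp hsum
    intro f hf
    simp only [hInI, Finset.mem_filter, Finset.mem_univ, true_and] at hf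
    exact hle f hf
  have heInI : e ∈ InI := by simp [hInI, he]
  have hcard : (Φ'.bwd [e] S).ncard = S.ncard := heach e heInI
  refine ⟨⟨?_, ?_⟩, hcard⟩
  · -- synced
    obtain ⟨u, I₀, hu, huend, hSeq⟩ := hsync
    refine ⟨e :: u, I₀, ⟨rfl, ?_⟩, ?_, ?_⟩
    · rw [he]; exact hu
    · show H.pathEnd (H.tgt e) u = _
      rw [he]; exact huend
    · have : (e :: u) = [e] ++ u := rfl
      rw [this, Φ'.bwd_append, ← hSeq]
  · -- maximal
    intro K v hv hvend
    rw [← Φ'.bwd_append, hcard]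
    refine hmax K (v ++ [e]) ((H.isPathFrom_append _ _ _).mpr ⟨hv, hvend.symm, trivial⟩) ?_
    rw [H.pathEnd_append, hvend]
    exact he
end

section
/- Let G be a finite strongly connected graph and Φ: G → H, Ψ: H → K right resolvers. If both Φ and Ψ are synchronizing then so is Ψ∘Φ. (Here use the characterization: a right resolver Θ: G → H is synchronizing iff for every vertex I of H there is a path u in H starting at I such that all lifts of u starting in the fiber ∂Θ^{-1}(I) end at the same vertex.) -/
open MGraph


/-- Composition of graph homomorphisms. -/
def MGraph.Hom.comp {G H K : MGraph} (Ψ : MGraph.Hom H K) (Φ : MGraph.Hom G H) :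
    MGraph.Hom G K where
  vmap := Ψ.vmap ∘ Φ.vmap
  emap := Ψ.emap ∘ Φ.emap
  src_map := fun e => by simp [Function.comp, Ψ.src_map, Φ.src_map]
  tgt_map := fun e => by simp [Function.comp, Ψ.tgt_map, Φ.tgt_map]

/-- A right resolver is synchronizing if for every vertex `I` of the codomain there
is a path `u` from `I` such that all lifts of `u` starting in the fiber over `I`
end at the same vertex, i.e. `|∂Φ⁻¹(I) ·_Φ u| = 1`. -/
def MGraph.Hom.Synchronizing {G H : MGraph} (Φ : MGraph.Hom G H) : Prop :=
  ∀ I : H.V, ∃ u : List H.E, H.IsPathFrom I u ∧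
    (Φ.fwd (Φ.vmap ⁻¹' {I}) u).ncard = 1

theorem MGraph.isPathFrom_append_s17 {G : MGraph} (I : G.V) (w w' : List G.E) :
    G.IsPathFrom I (w ++ w') ↔
      G.IsPathFrom I w ∧ G.IsPathFrom (G.pathEnd I w) w' := by
  induction w generalizing I with
  | nil => simp [IsPathFrom, pathEnd]
  | cons e es ih => simp [IsPathFrom, pathEnd, ih, and_assoc]

theorem MGraph.pathEnd_append_s17 {G : MGraph} (I : G.V) (w w' : List G.E) :
    G.pathEnd I (w ++ w') = G.pathEnd (G.pathEnd I w) w' := by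
  induction w generalizing I with
  | nil => rfl
  | cons e es ih => simp [pathEnd, ih]

theorem MGraph.map_isPathFrom {G H : MGraph} (Φ : Hom G H) (I : G.V) (π : List G.E)
    (h : G.IsPathFrom I π) : H.IsPathFrom (Φ.vmap I) (π.map Φ.emap) ∧
    H.pathEnd (Φ.vmap I) (π.map Φ.emap) = Φ.vmap (G.pathEnd I π) := by
  induction π generalizing I with
  | nil => simp [IsPathFrom, pathEnd]
  | cons e es ih =>
    obtain ⟨hs, hp⟩ := h
    have h2 := ih (G.tgt e) hp
    refine ⟨⟨by rw [Φ.src_map, hs], ?_⟩, ?_⟩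
    · simpa [Φ.tgt_map] using h2.1
    · simpa [pathEnd, Φ.tgt_map] using h2.2

theorem MGraph.lift_exists {G H : MGraph} {Φ : Hom G H} (hΦ : Φ.RightResolving)
    (I : G.V) (u : List H.E) (h : H.IsPathFrom (Φ.vmap I) u) :
    ∃ π : List G.E, G.IsPathFrom I π ∧ π.map Φ.emap = u := by
  induction u generalizing I with
  | nil => exact ⟨[], trivial, rfl⟩
  | cons f fs ih =>
    obtain ⟨hs, hp⟩ := h
    obtain ⟨e, he, hmap⟩ := (hΦ.2 I).surjOn hs
    have htgt : Φ.vmap (G.tgt e) = H.tgt f := by rw [← hmap, Φ.tgt_map]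
    obtain ⟨π, hπ, hm⟩ := ih (G.tgt e) (htgt ▸ hp)
    exact ⟨e :: π, ⟨he, hπ⟩, by simp [hmap, hm]⟩

theorem MGraph.lift_unique {G H : MGraph} {Φ : Hom G H} (hΦ : Φ.RightResolving)
    (I : G.V) (π π' : List G.E) (h : G.IsPathFrom I π) (h' : G.IsPathFrom I π')
    (hm : π.map Φ.emap = π'.map Φ.emap) : π = π' := by
  induction π generalizing I π' with
  | nil =>
    cases π' with
    | nil => rfl
    | cons e' es' => simp at hm
  | cons e es ih =>
    cases π' with
    | nil => simp at hm
    | cons e' es' =>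
      simp only [List.map_cons, List.cons.injEq] at hm
      obtain ⟨hs, hp⟩ := h
      obtain ⟨hs', hp'⟩ := h'
      have he : e = e' := (hΦ.2 I).injOn hs hs' hm.1
      subst he
      exact congrArg _ (ih (G.tgt e) es' hp hp' hm.2)

/-- The composition of synchronizing right resolvers is
synchronizing. -/
theorem synchronizing_comp {G H K : MGraph} (hG : G.StronglyConnected)
    (Φ : MGraph.Hom G H) (Ψ : MGraph.Hom H K)
    (hΦ : Φ.RightResolving) (hΨ : Ψ.RightResolving)
    (hΦs : Φ.Synchronizing) (hΨs : Ψ.Synchronizing) :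
    (Ψ.comp Φ).Synchronizing := by
  intro I
  obtain ⟨u, hu, hcard⟩ := hΨs I
  obtain ⟨J, hJ⟩ := Set.ncard_eq_one.mp hcard
  obtain ⟨v, hv, hcardv⟩ := hΦs J
  obtain ⟨Jfin, hJfin⟩ := Set.ncard_eq_one.mp hcardv
  have hJmem : J ∈ Ψ.fwd (Ψ.vmap ⁻¹' {I}) u := by rw [hJ]; exact rfl
  obtain ⟨I₀, hI₀, πu, hπu, hπumap, hπuend⟩ := hJmem
  have hI₀' : Ψ.vmap I₀ = I := hI₀
  have hΨJ : Ψ.vmap J = K.pathEnd I u := by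
    have := (MGraph.map_isPathFrom Ψ I₀ πu hπu).2
    rw [hπumap, hI₀', hπuend] at this
    exact this.symm
  refine ⟨u ++ v.map Ψ.emap, ?_, ?_⟩
  · rw [MGraph.isPathFrom_append_s17]
    refine ⟨hu, ?_⟩
    have := (MGraph.map_isPathFrom Ψ J v hv).1
    rwa [hΨJ] at this
  · rw [Set.ncard_eq_one]
    refine ⟨Jfin, ?_⟩
    ext Y
    simp only [Set.mem_singleton_iff]
    constructor
    · rintro ⟨X, hX, π, hπ, hπmap, hπend⟩
      have hX' : Ψ.vmap (Φ.vmap X) = I := hX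
      set n := u.length with hn
      set π1 := π.take n with hπ1
      set π2 := π.drop n with hπ2
      have hsplit : π = π1 ++ π2 := (List.take_append_drop n π).symm
      have hσ : (π.map Φ.emap).map Ψ.emap = u ++ v.map Ψ.emap := by
        rw [List.map_map]; exact hπmap
      have hσ1 : (π1.map Φ.emap).map Ψ.emap = u := by
        rw [List.map_take, List.map_take, hσ, hn, List.take_left]
      have hσ2 : (π2.map Φ.emap).map Ψ.emap = v.map Ψ.emap := by
        rw [List.map_drop, List.map_drop, hσ, hn, List.drop_left]
      have hpaths := (MGraph.isPathFrom_append_s17 X π1 π2).mp (hsplit ▸ hπ)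
      set X₁ := G.pathEnd X π1 with hX₁
      have him1 := MGraph.map_isPathFrom Φ X π1 hpaths.1
      have hX₁J : Φ.vmap X₁ = J := by
        have : Φ.vmap X₁ ∈ Ψ.fwd (Ψ.vmap ⁻¹' {I}) u :=
          ⟨Φ.vmap X, hX', π1.map Φ.emap, him1.1, hσ1, him1.2⟩
        rw [hJ] at this
        exact this
      have him2 := MGraph.map_isPathFrom Φ X₁ π2 hpaths.2
      have hσ2v : π2.map Φ.emap = v := by
        apply MGraph.lift_unique hΨ J
        · have := him2.1
          rwa [hX₁J] at this
        · exact hv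
        · exact hσ2
      have hYmem : Y ∈ Φ.fwd (Φ.vmap ⁻¹' {J}) v := by
        refine ⟨X₁, hX₁J, π2, hpaths.2, hσ2v, ?_⟩
        rw [← hπend, hsplit, MGraph.pathEnd_append_s17]
      rw [hJfin] at hYmem
      exact hYmem
    · intro hY
      obtain ⟨X₀, hX₀⟩ := hΦ.1 I₀
      obtain ⟨ρ, hρ, hρmap⟩ := MGraph.lift_exists hΦ X₀ πu (by rwa [hX₀])
      set X₂ := G.pathEnd X₀ ρ with hX₂
      have hX₂J : Φ.vmap X₂ = J := by
        have := (MGraph.map_isPathFrom Φ X₀ ρ hρ).2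
        rw [hρmap, hX₀, hπuend] at this
        exact this.symm
      obtain ⟨ρ', hρ', hρ'map⟩ := MGraph.lift_exists hΦ X₂ v (by rwa [hX₂J])
      have hend : G.pathEnd X₂ ρ' = Jfin := by
        have : G.pathEnd X₂ ρ' ∈ Φ.fwd (Φ.vmap ⁻¹' {J}) v :=
          ⟨X₂, hX₂J, ρ', hρ', hρ'map, rfl⟩
        rw [hJfin] at this
        exact this
      refine ⟨X₀, ?_, ρ ++ ρ', ?_, ?_, ?_⟩
      · show Ψ.vmap (Φ.vmap X₀) = I
        rw [hX₀, hI₀']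
      · rw [MGraph.isPathFrom_append_s17]
        exact ⟨hρ, hρ'⟩
      · show (ρ ++ ρ').map (Ψ.emap ∘ Φ.emap) = u ++ v.map Ψ.emap
        rw [List.map_append, ← List.map_map, ← List.map_map, hρmap, hρ'map, hπumap]
      · rw [MGraph.pathEnd_append_s17, hend]
        exact hY.symm
end
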